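/- MIMO improves sensing: for M ≥ 1 antennas, P^M_FA,CSS(c) = 1 - Q(√M·(Δδ/σ)·√(((1-ρ)c+2ρ)/(1+ρ)) + Q⁻¹(β)) is nonincreasing in M (for Δδ < 0), and therefore the MIMO return function v^M(d,x) = P^M_FA,LSS - P^M_FA,CSS(x·d) satisfies v^M(d,x) ≥ v¹(d,x)... specifically, P^M_FA,CSS(c) ≤ P¹_FA,CSS(c) for all c ≥ 1 and M ≥ 1. -/

import Mathlib

open Real

/-- The Gaussian tail function `Q(x) = (1/√(2π)) ∫_x^∞ exp(-u²/2) du`. -/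
noncomputable def gaussQ (x : ℝ) : ℝ :=
  (Real.sqrt (2 * Real.pi))⁻¹ * ∫ u in Set.Ioi x, Real.exp (-u ^ 2 / 2)

/-- The MIMO cooperative false-alarm probability
`P^M_FA,CSS(c) = 1 - Q(√M·(Δδ/σ)·√(((1-ρ)c+2ρ)/(1+ρ)) + Q⁻¹(β))`. -/
noncomputable def PfaCSS_MIMO (Δδ σ ρ Qinvβ : ℝ) (M : ℕ) (c : ℝ) : ℝ :=
  1 - gaussQ (Real.sqrt M * (Δδ / σ) * Real.sqrt (((1 - ρ) * c + 2 * ρ) / (1 + ρ))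
      + Qinvβ)

/-
The deflection `√M · (Δδ/σ) · √(…)` is `√M` times a nonpositive number, so it decreases
with `M`; since `Q` is antitone, `1 - Q` of it decreases as well.
-/

lemma integrable_exp_neg_sq_div_two : MeasureTheory.Integrable fun u : ℝ ↦ exp (-u ^ 2 / 2) := by
  convert integrable_exp_neg_mul_sq (b := 1 / 2) (by norm_num) using 2 with u
  ring_nf

lemma gaussQ_antitone : Antitone gaussQ := by
  intro x y hxy
  refine mul_le_mul_of_nonneg_left ?_ (by positivity)
  exact MeasureTheory.setIntegral_mono_set integrable_exp_neg_sq_div_two.integrableOn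
    (.of_forall fun u ↦ (exp_pos _).le) (.of_forall (Set.Ioi_subset_Ioi hxy))

lemma PfaCSS_MIMO_antitone {Δδ σ : ℝ} (hΔδ : Δδ ≤ 0) (hσ : 0 ≤ σ) (ρ Qinvβ c : ℝ) :
    Antitone fun M : ℕ ↦ PfaCSS_MIMO Δδ σ ρ Qinvβ M c := by
  intro M N hMN
  set s := Real.sqrt (((1 - ρ) * c + 2 * ρ) / (1 + ρ))
  have hdefl : Δδ / σ * s ≤ 0 :=
    mul_nonpos_of_nonpos_of_nonneg (div_nonpos_of_nonpos_of_nonneg hΔδ hσ) (sqrt_nonneg _)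
  have hsqrt : Real.sqrt M ≤ Real.sqrt N := sqrt_le_sqrt (Nat.cast_le.mpr hMN)
  have harg : Real.sqrt N * (Δδ / σ) * s ≤ Real.sqrt M * (Δδ / σ) * s := by
    simpa only [mul_assoc] using mul_le_mul_of_nonpos_right hsqrt hdefl
  exact sub_le_sub_left (gaussQ_antitone (add_le_add_left harg Qinvβ)) 1

theorem mimo_improves_sensing_general (Δδ σ ρ Qinvβ : ℝ)
    (hΔδ : Δδ < 0) (hσ : 0 < σ) :
    (∀ M N : ℕ, 1 ≤ M → M ≤ N → ∀ c : ℝ, 1 ≤ c →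
      PfaCSS_MIMO Δδ σ ρ Qinvβ N c ≤ PfaCSS_MIMO Δδ σ ρ Qinvβ M c) ∧
    (∀ M : ℕ, 1 ≤ M → ∀ c : ℝ, 1 ≤ c →
      PfaCSS_MIMO Δδ σ ρ Qinvβ M c ≤ PfaCSS_MIMO Δδ σ ρ Qinvβ 1 c) := by
  have h c := PfaCSS_MIMO_antitone hΔδ.le hσ.le ρ Qinvβ c
  exact ⟨fun _ _ _ hMN c _ ↦ h c hMN, fun _ hM c _ ↦ h c hM⟩

/-- MIMO improves sensing: for `Δδ < 0`, `P^M_FA,CSS(c)` is nonincreasing in the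
number of antennas `M ≥ 1`; in particular `P^M_FA,CSS(c) ≤ P¹_FA,CSS(c)` for all
`c ≥ 1` and `M ≥ 1`. -/
theorem mimo_improves_sensing (Δδ σ ρ β Qinvβ : ℝ)
    (hΔδ : Δδ < 0) (hσ : 0 < σ) (hρ0 : 0 ≤ ρ) (hρ1 : ρ < 1)
    (hβ0 : 0 < β) (hβ1 : β < 1) (hQinv : gaussQ Qinvβ = β) :
    (∀ M N : ℕ, 1 ≤ M → M ≤ N → ∀ c : ℝ, 1 ≤ c →
      PfaCSS_MIMO Δδ σ ρ Qinvβ N c ≤ PfaCSS_MIMO Δδ σ ρ Qinvβ M c) ∧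
    (∀ M : ℕ, 1 ≤ M → ∀ c : ℝ, 1 ≤ c →
      PfaCSS_MIMO Δδ σ ρ Qinvβ M c ≤ PfaCSS_MIMO Δδ σ ρ Qinvβ 1 c) :=
  mimo_improves_sensing_general Δδ σ ρ Qinvβ hΔδ hσ
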